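/- Let R be a totally ordered idempotent semifield and let C ∈ M_n(R) with per C ≠ 0, where per C = Σ_{σ∈S_n} C_{1σ(1)}⋯C_{nσ(n)}. Then there exist diagonal matrices D and D' with invertible diagonal entries and a permutation matrix Σ such that the matrix B = Σ·D·C·D' satisfies B_{ij} ≤ 1 for all i, j ∈ [n] and B_{ii} = 1 for all i ∈ [n]. -/

import Mathlib

/-!
Pick a permutation `τ` attaining the permanent: in a totally ordered idempotent semiring a finite
sum is the maximum of its terms. Scaling row `k` by `C k (τ k)⁻¹` and permuting the columns by `τ`
gives a matrix `A` with unit diagonal all of whose permutation weights are at most `1`. Completing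
a simple cycle by fixed points shows that every cycle of the weighted digraph `A` has weight at
most `1`, so cycles can be cut out of walks and every walk from `k` is bounded by the potential
`w k`, the sum of the weights of the walks from `k` with fewer than `n` steps. Thus
`A k m * w m ≤ w k` and `1 ≤ w k`, and `w k⁻¹ * A k m * w m` is the required normal form.
-/

open Finset

def perm {R : Type*} [CommSemiring R] {n : ℕ} (A : Matrix (Fin n) (Fin n) R) : R :=
  ∑ σ : Equiv.Perm (Fin n), ∏ i, A i (σ i)

namespace Finset

variable {ι R : Type*} [IdemSemiring R]

theorem sum_eq_sup (s : Finset ι) (f : ι → R) : ∑ i ∈ s, f i = s.sup f := by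
  classical
  induction s using Finset.induction_on with
  | empty => exact bot_eq_zero.symm
  | insert a s ha ih => rw [sum_insert ha, sup_insert, ih, add_eq_sup]

theorem exists_mem_eq_sum_of_total (htot : ∀ a b : R, a ≤ b ∨ b ≤ a) {s : Finset ι}
    (hs : s.Nonempty) (f : ι → R) : ∃ i ∈ s, ∑ j ∈ s, f j = f i := by
  simp_rw [sum_eq_sup]
  induction hs using Finset.Nonempty.cons_induction with
  | singleton a => exact ⟨a, mem_singleton_self a, sup_singleton⟩
  | cons a s ha hs ih =>
    obtain ⟨i, hi, hsup⟩ := ih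
    rw [sup_cons, hsup]
    rcases htot (f a) (f i) with h | h
    · exact ⟨i, mem_cons_of_mem hi, sup_eq_right.mpr h⟩
    · exact ⟨a, mem_cons_self a s, sup_eq_left.mpr h⟩

end Finset

section WalkWeight

variable {α R : Type*} [CommMonoid R] (G : α → α → R)

def walkWeight (l : List α) : R := (List.zipWith G l l.tail).prod

@[simp] lemma walkWeight_nil : walkWeight G [] = 1 := rfl

@[simp] lemma walkWeight_singleton (a : α) : walkWeight G [a] = 1 := rfl

@[simp] lemma walkWeight_cons_cons (a b : α) (l : List α) :
    walkWeight G (a :: b :: l) = G a b * walkWeight G (b :: l) := by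
  simp [walkWeight]

lemma walkWeight_append_cons (l₁ : List α) (m : α) (l₂ : List α) :
    walkWeight G (l₁ ++ m :: l₂) = walkWeight G (l₁ ++ [m]) * walkWeight G (m :: l₂) := by
  induction l₁ with
  | nil => simp
  | cons a t ih => cases t <;> simp_all [mul_assoc]

lemma walkWeight_cycle [DecidableEq α] {m : α} {l : List α} (hl : (m :: l).Nodup) :
    walkWeight G (m :: l ++ [m]) = ∏ x ∈ (m :: l).toFinset, G x ((m :: l).formPerm x) := by
  rw [List.prod_toFinset _ hl, walkWeight]
  congr 1
  refine List.ext_getElem (by simp) fun i _ h₂ => ?_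
  simp only [List.getElem_zipWith, List.getElem_map]
  rw [List.getElem_append_left (by simpa using h₂)]
  rcases (Nat.lt_succ_iff.mp (by simpa using h₂) : i ≤ l.length).eq_or_lt with rfl | hi
  · simp
  · rw [List.formPerm_apply_lt_getElem _ hl _ (by simpa using hi)]
    simp [hi]

end WalkWeight

lemma List.exists_cons_nodup_of_not_nodup {α : Type*} {l : List α} (hl : ¬l.Nodup) :
    ∃ (l₁ : List α) (m : α) (l₂ l₃ : List α),
      l = l₁ ++ m :: l₂ ++ m :: l₃ ∧ (m :: l₂).Nodup := by
  induction l with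
  | nil => exact absurd List.nodup_nil hl
  | cons x t ih =>
    by_cases ht : t.Nodup
    · have hx : x ∈ t := by simpa [List.nodup_cons, ht] using hl
      obtain ⟨l₂, l₃, rfl⟩ := List.append_of_mem hx
      refine ⟨[], x, l₂, l₃, rfl, List.nodup_cons.mpr ⟨fun h => ?_, ht.sublist ?_⟩⟩
      · exact (List.nodup_append.mp ht).2.2 x h x List.mem_cons_self rfl
      · exact List.sublist_append_left _ _
    · obtain ⟨l₁, m, l₂, l₃, rfl, hnd⟩ := ih ht
      exact ⟨x :: l₁, m, l₂, l₃, rfl, hnd⟩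

section Potential

variable {α R : Type*} [Fintype α] [IdemCommSemiring R] (G : α → α → R)

def walkPotential (k : α) : R :=
  ∑ p ∈ range (Fintype.card α), ∑ f : Fin p → α, walkWeight G (k :: List.ofFn f)

variable {G}

lemma walkWeight_le_walkPotential_of_nodup {l : List α} (hl : l.Nodup) {k : α}
    (hk : l.head? = some k) : walkWeight G l ≤ walkPotential G k := by
  obtain ⟨t, rfl⟩ := List.head?_eq_some_iff.mp hk
  have ht : t.length < Fintype.card α := by simpa using hl.length_le_card
  refine le_trans ?_ (single_le_sum_of_canonicallyOrdered (mem_range.mpr ht))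
  conv_lhs => rw [← List.ofFn_get t]
  exact single_le_sum_of_canonicallyOrdered (f := fun f => walkWeight G (k :: List.ofFn f))
    (mem_univ t.get)

lemma one_le_walkPotential (k : α) : 1 ≤ walkPotential G k :=
  walkWeight_le_walkPotential_of_nodup (List.nodup_singleton k) rfl

lemma walkWeight_le_walkPotential
    (hcyc : ∀ m l, (m :: l).Nodup → walkWeight G (m :: l ++ [m]) ≤ 1)
    {l : List α} {k : α} (hk : l.head? = some k) :
    walkWeight G l ≤ walkPotential G k := by
  by_cases hl : l.Nodup
  · exact walkWeight_le_walkPotential_of_nodup hl hk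
  obtain ⟨l₁, m, l₂, l₃, hsplit, hnd⟩ := List.exists_cons_nodup_of_not_nodup hl
  subst hsplit
  have hshort : walkWeight G (l₁ ++ m :: l₃) ≤ walkPotential G k :=
    walkWeight_le_walkPotential hcyc (by simpa using hk)
  calc walkWeight G (l₁ ++ m :: l₂ ++ m :: l₃)
      = walkWeight G (m :: l₂ ++ [m]) * walkWeight G (l₁ ++ m :: l₃) := by
        rw [List.append_assoc, List.cons_append, walkWeight_append_cons G l₁ m (l₂ ++ m :: l₃),
          ← List.cons_append, walkWeight_append_cons G (m :: l₂) m l₃,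
          walkWeight_append_cons G l₁ m l₃]
        ring
    _ ≤ 1 * walkWeight G (l₁ ++ m :: l₃) := by gcongr; exact hcyc m l₂ hnd
    _ ≤ walkPotential G k := by rwa [one_mul]
termination_by l.length
decreasing_by subst hsplit; simp

lemma mul_walkPotential_le (hcyc : ∀ m l, (m :: l).Nodup → walkWeight G (m :: l ++ [m]) ≤ 1)
    (k m : α) : G k m * walkPotential G m ≤ walkPotential G k := by
  rw [walkPotential, mul_sum, sum_eq_sup]
  refine Finset.sup_le fun p _ => ?_
  rw [mul_sum, sum_eq_sup]
  refine Finset.sup_le fun f _ => ?_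
  rw [← walkWeight_cons_cons]
  exact walkWeight_le_walkPotential hcyc rfl

end Potential

section Assignment

variable {ι R : Type*} [Fintype ι] [DecidableEq ι] [IdemCommSemiring R]

lemma walkWeight_cycle_le_one {A : ι → ι → R} (hdiag : ∀ i, A i i = 1)
    (hperm : ∀ ρ : Equiv.Perm ι, ∏ i, A i (ρ i) ≤ 1) {m : ι} {l : List ι}
    (hl : (m :: l).Nodup) : walkWeight A (m :: l ++ [m]) ≤ 1 := by
  rw [walkWeight_cycle A hl, prod_subset (subset_univ _) fun x _ hx => ?_]
  · exact hperm _
  · rw [List.formPerm_apply_of_notMem (by simpa using hx), hdiag]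

theorem exists_scaling_le_one_of_sum_prod_ne_zero (htot : ∀ a b : R, a ≤ b ∨ b ≤ a)
    (hinv : ∀ a : R, a ≠ 0 → IsUnit a) {C : ι → ι → R}
    (hC : ∑ σ : Equiv.Perm ι, ∏ i, C i (σ i) ≠ 0) :
    ∃ (τ : Equiv.Perm ι) (r s : ι → R), (∀ i, IsUnit (r i)) ∧ (∀ j, IsUnit (s j)) ∧
      (∀ i j, r i * C i j * s j ≤ 1) ∧ ∀ i, r i * C i (τ i) * s (τ i) = 1 := by
  obtain ⟨τ, -, hτ⟩ := exists_mem_eq_sum_of_total htot univ_nonempty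
    fun σ : Equiv.Perm ι => ∏ i, C i (σ i)
  have hmax (ρ : Equiv.Perm ι) : ∏ i, C i (ρ i) ≤ ∏ i, C i (τ i) :=
    hτ ▸ single_le_sum_of_canonicallyOrdered (f := fun σ : Equiv.Perm ι => ∏ i, C i (σ i))
      (mem_univ ρ)
  have hCτ (i : ι) : C i (τ i) ≠ 0 := fun h => hC (hτ ▸ prod_eq_zero (mem_univ i) h)
  choose e he using fun i => (hinv _ (hCτ i)).exists_left_inv
  set A : ι → ι → R := fun k m => e k * C k (τ m)
  have hA_perm (ρ : Equiv.Perm ι) : ∏ i, A i (ρ i) ≤ 1 := calc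
    ∏ i, A i (ρ i) = (∏ i, e i) * ∏ i, C i ((τ * ρ) i) := prod_mul_distrib
    _ ≤ (∏ i, e i) * ∏ i, C i (τ i) := mul_le_mul_right (hmax _) _
    _ = 1 := by rw [← prod_mul_distrib]; exact prod_eq_one fun i _ => he i
  have hcyc (m : ι) (l : List ι) (hl : (m :: l).Nodup) : walkWeight A (m :: l ++ [m]) ≤ 1 :=
    walkWeight_cycle_le_one he hA_perm hl
  set w := walkPotential A
  have hw (k : ι) : w k ≠ 0 := fun h => hC <| by
    have h1 : (1 : R) = 0 := le_zero_iff.mp (h ▸ one_le_walkPotential k)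
    rw [← mul_one (∑ σ : Equiv.Perm ι, _), h1, mul_zero]
  choose z hz using fun k => (hinv _ (hw k)).exists_left_inv
  refine ⟨τ, fun i => z i * e i, fun j => w (τ.symm j),
    fun i => (IsUnit.of_mul_eq_one _ (hz i)).mul (IsUnit.of_mul_eq_one _ (he i)),
    fun j => hinv _ (hw _), fun i j => ?_, fun i => ?_⟩
  · calc z i * e i * C i j * w (τ.symm j) = z i * (A i (τ.symm j) * w (τ.symm j)) := by
          simp only [A, Equiv.apply_symm_apply]; ring
      _ ≤ z i * w i := by gcongr; exact mul_walkPotential_le hcyc i _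
      _ = 1 := hz i
  · calc z i * e i * C i (τ i) * w (τ.symm (τ i)) = z i * w i * (e i * C i (τ i)) := by
          rw [Equiv.symm_apply_apply]; ring
      _ = 1 := by rw [hz, he, one_mul]

end Assignment

lemma permMatrix_mul_diagonal_mul_mul_diagonal {n R : Type*} [Fintype n] [DecidableEq n]
    [CommSemiring R] (σ : Equiv.Perm n) (d d' : n → R) (C : Matrix n n R) :
    (Matrix.of fun i j => if σ i = j then (1 : R) else 0) * Matrix.diagonal d * C *
      Matrix.diagonal d' = Matrix.of fun i j => d (σ i) * C (σ i) j * d' j := by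
  ext i j
  simp [Matrix.mul_apply, Matrix.diagonal]

/-- Butkovič's normal form: over a totally ordered idempotent semifield `R`, any matrix
`C` with nonzero permanent can be brought, by two diagonal scalings with invertible
diagonal entries and a row permutation, to a matrix `B = Σ·D·C·D'` with all entries at
most `1` (in the natural order `a ≤ b ↔ a + b = b`) and unit diagonal. -/
theorem stmt9 {R : Type*} [CommSemiring R]
    (hidem : ∀ a : R, a + a = a)
    (htot : ∀ a b : R, a + b = b ∨ a + b = a)
    (hinv : ∀ a : R, a ≠ 0 → IsUnit a)
    (n : ℕ) (C : Matrix (Fin n) (Fin n) R) (hC : perm C ≠ 0) :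
    ∃ (D D' : Matrix (Fin n) (Fin n) R) (σ : Equiv.Perm (Fin n)),
      (∀ i j, i ≠ j → D i j = 0) ∧ (∀ i, IsUnit (D i i)) ∧
      (∀ i j, i ≠ j → D' i j = 0) ∧ (∀ i, IsUnit (D' i i)) ∧
      ∃ B : Matrix (Fin n) (Fin n) R,
        B = (Matrix.of fun i j => if σ i = j then (1 : R) else 0) * D * C * D' ∧
        (∀ i j, B i j + 1 = 1) ∧ ∀ i, B i i = 1 := by
  let _ : IdemCommSemiring R := { ‹CommSemiring R›, IdemSemiring.ofSemiring hidem with }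
  obtain ⟨τ, r, s, hr, hs, hle, hdiag⟩ := exists_scaling_le_one_of_sum_prod_ne_zero
    (fun a b => (htot a b).imp id fun h => (add_comm b a).trans h) hinv hC
  refine ⟨Matrix.diagonal r, Matrix.diagonal s, τ.symm, fun i j => Matrix.diagonal_apply_ne r,
    fun i => by simpa using hr i, fun i j => Matrix.diagonal_apply_ne s,
    fun i => by simpa using hs i, _, rfl, fun i j => ?_, fun i => ?_⟩ <;>
    rw [permMatrix_mul_diagonal_mul_mul_diagonal, Matrix.of_apply]
  · exact hle _ j
  · simpa using hdiag (τ.symm i)
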